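/- Let n ≥ 1 and let V be a bicompatible subgroup of S([n]^2) such that the graph G_R is a complete graph on [n]. Then for each v ∈ V there is a unique σ_v ∈ S_n such that the first coordinate of v(a,b) equals σ_v(a) for all a, b ∈ [n], and the map σ : V → S_n sending v to σ_v is a group homomorphism, i.e. σ_{uw} = σ_u ∘ σ_w for all u, w ∈ V. -/

import Mathlib

/-- The permutation `u ⊗ 1` of `[n]³`, acting as `(x,y,z) ↦ (u(x,y), z)`. -/
def tensorOne {n : ℕ} (u : Equiv.Perm (Fin n × Fin n)) :
    Equiv.Perm (Fin n × Fin n × Fin n) :=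
  (Equiv.prodAssoc (Fin n) (Fin n) (Fin n)).permCongr (u.prodCongr (Equiv.refl (Fin n)))

/-- The permutation `1 ⊗ u` of `[n]³`, acting as `(x,y,z) ↦ (x, u(y,z))`. -/
def oneTensor {n : ℕ} (u : Equiv.Perm (Fin n × Fin n)) :
    Equiv.Perm (Fin n × Fin n × Fin n) :=
  (Equiv.refl (Fin n)).prodCongr u

/-- `u` is compatible with `v` if `(v ⊗ 1)(1 ⊗ u) = (1 ⊗ u)(v ⊗ 1)` in `S([n]³)`. -/
def Compatible {n : ℕ} (u v : Equiv.Perm (Fin n × Fin n)) : Prop :=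
  tensorOne v * oneTensor u = oneTensor u * tensorOne v

/-- The graph `G_R` on `[n]` attached to a subgroup `V ≤ S([n]²)`: distinct
`a, b` are adjacent iff some `v ∈ V` maps some point of row `a` to a point of
row `b`. -/
def GR {n : ℕ} (V : Subgroup (Equiv.Perm (Fin n × Fin n))) : SimpleGraph (Fin n) where
  Adj a b := a ≠ b ∧ ∃ x y : Fin n, ∃ v ∈ V, v (a, x) = (b, y)
  symm := by
    constructor
    rintro a b ⟨hab, x, y, v, hv, hvab⟩
    refine ⟨hab.symm, y, x, v⁻¹, V.inv_mem hv, ?_⟩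
    rw [← hvab]
    exact v.symm_apply_apply (a, x)
  loopless := ⟨fun a h => h.1 rfl⟩

/-- The graph `G_C` on `[n]` attached to a subgroup `V ≤ S([n]²)`: distinct
`a, b` are adjacent iff some `v ∈ V` maps some point of column `a` to a point
of column `b`. -/
def GC {n : ℕ} (V : Subgroup (Equiv.Perm (Fin n × Fin n))) : SimpleGraph (Fin n) where
  Adj a b := a ≠ b ∧ ∃ x y : Fin n, ∃ v ∈ V, v (x, a) = (y, b)
  symm := by
    constructor
    rintro a b ⟨hab, x, y, v, hv, hvab⟩
    refine ⟨hab.symm, y, x, v⁻¹, V.inv_mem hv, ?_⟩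
    rw [← hvab]
    exact v.symm_apply_apply (x, a)
  loopless := ⟨fun a h => h.1 rfl⟩

/-!
Comparing first coordinates in `(v ⊗ 1)(1 ⊗ u) = (1 ⊗ u)(v ⊗ 1)` shows that `v(x, y)` and
`v(x, y')` lie in the same row whenever `u` maps a point of row `y` into row `y'`. When `G_R` is
complete, the row of `v(a, b)` is therefore a function `f_v a` of `a` alone. Row maps compose,
`f_{wv} = f_w ∘ f_v`, so `f_{v⁻¹}` inverts `f_v` and `v ↦ f_v` is multiplicative.
-/

open Equiv

section MapsRows

variable {α : Type*}

def MapsRows (v : Perm (α × α)) (f : α → α) : Prop :=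
  ∀ a b, (v (a, b)).1 = f a

theorem MapsRows.one : MapsRows (1 : Perm (α × α)) id :=
  fun _ _ => rfl

theorem MapsRows.mul {v w : Perm (α × α)} {f g : α → α} (hw : MapsRows w g) (hv : MapsRows v f) :
    MapsRows (w * v) (g ∘ f) := by
  intro a b
  rw [Perm.mul_apply, ← Prod.mk.eta (p := v (a, b)), hw, hv, Function.comp_apply]

theorem MapsRows.unique [Nonempty α] {v : Perm (α × α)} {f g : α → α} (hf : MapsRows v f)
    (hg : MapsRows v g) : f = g :=
  funext fun a => (hf a (Classical.arbitrary α)).symm.trans (hg a _)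

theorem MapsRows.leftInverse [Nonempty α] {v : Perm (α × α)} {f g : α → α} (hv : MapsRows v f)
    (hv' : MapsRows v⁻¹ g) : Function.LeftInverse g f :=
  congrFun ((hv'.mul hv).unique (inv_mul_cancel v ▸ MapsRows.one))

theorem existsUnique_perm_mapsRows [Nonempty α] {v : Perm (α × α)} (hv : ∃ f, MapsRows v f)
    (hv' : ∃ g, MapsRows v⁻¹ g) : ∃! σ : Perm α, MapsRows v σ := by
  obtain ⟨f, hf⟩ := hv
  obtain ⟨g, hg⟩ := hv'
  have hg' : MapsRows v⁻¹⁻¹ f := (inv_inv v).symm ▸ hf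
  refine ⟨⟨f, g, hf.leftInverse hg, hg.leftInverse hg'⟩, hf, fun σ hσ => ?_⟩
  exact Equiv.coe_fn_injective (hσ.unique hf)

theorem exists_mapsRows_of_fst_apply_eq [Nonempty α] {v : Perm (α × α)}
    (hv : ∀ a b b', (v (a, b)).1 = (v (a, b')).1) : ∃ f, MapsRows v f :=
  ⟨fun a => (v (a, Classical.arbitrary α)).1, fun a b => hv a b _⟩

end MapsRows

section Compatible

variable {n : ℕ} {u v : Perm (Fin n × Fin n)}

theorem Compatible.fst_apply_fst_apply (h : Compatible u v) (x y z : Fin n) :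
    (v (x, (u (y, z)).1)).1 = (v (x, y)).1 := by
  have := congrArg (fun e : Perm (Fin n × Fin n × Fin n) => (e (x, y, z)).1) h
  simpa [tensorOne, oneTensor, Perm.mul_apply, permCongr_apply, prodCongr_apply, prodAssoc,
    Prod.map] using this

theorem Compatible.fst_apply_eq {b b' z w : Fin n} (h : Compatible u v) (hu : u (b, z) = (b', w))
    (a : Fin n) : (v (a, b')).1 = (v (a, b)).1 := by
  simpa only [hu] using h.fst_apply_fst_apply a b z

theorem fst_apply_eq_of_forall_adj {V : Subgroup (Perm (Fin n × Fin n))}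
    (hV : ∀ u ∈ V, ∀ v ∈ V, Compatible u v) (hcomplete : ∀ a b : Fin n, a ≠ b → (GR V).Adj a b)
    (hv : v ∈ V) (a b b' : Fin n) : (v (a, b)).1 = (v (a, b')).1 := by
  obtain rfl | hbb' := eq_or_ne b b'
  · rfl
  obtain ⟨-, z, w, u, hu, huz⟩ := hcomplete b b' hbb'
  exact ((hV u hu v hv).fst_apply_eq huz a).symm

end Compatible

theorem stmt_19 (n : ℕ) (hn : 1 ≤ n)
    (V : Subgroup (Equiv.Perm (Fin n × Fin n)))
    (hV : ∀ u ∈ V, ∀ v ∈ V, Compatible u v)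
    (hcomplete : ∀ a b : Fin n, a ≠ b → (GR V).Adj a b) :
    (∀ v ∈ V, ∃! σ : Equiv.Perm (Fin n), ∀ a b : Fin n, (v (a, b)).1 = σ a) ∧
    (∀ u w : Equiv.Perm (Fin n × Fin n), u ∈ V → w ∈ V →
      ∀ σu σw σuw : Equiv.Perm (Fin n),
        (∀ a b : Fin n, (u (a, b)).1 = σu a) →
        (∀ a b : Fin n, (w (a, b)).1 = σw a) →
        (∀ a b : Fin n, ((u * w) (a, b)).1 = σuw a) →
        σuw = σu * σw) := by
  have : Nonempty (Fin n) := ⟨⟨0, hn⟩⟩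
  have hrows : ∀ v ∈ V, ∃ f, MapsRows v f := fun v hv =>
    exists_mapsRows_of_fst_apply_eq (fst_apply_eq_of_forall_adj hV hcomplete hv)
  refine ⟨fun v hv => existsUnique_perm_mapsRows (hrows v hv) (hrows _ (V.inv_mem hv)), ?_⟩
  intro u w _ _ σu σw σuw hu hw huw
  have hcomp : MapsRows (u * w) (σu ∘ σw) := MapsRows.mul (g := σu) hu hw
  exact Equiv.coe_fn_injective (MapsRows.unique (v := u * w) huw hcomp)
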